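/- Let 𝒜 be a finite nonempty set, μ a translation invariant probability measure on 𝒜^ℤ, and m ≥ 1 an integer. With G_k = 2^k ℤ and G_k^− = {j · 2^k : j < 0}, let B be any finite subset of G_m^− and, for 1 ≤ k ≤ m, let B_k be any finite subset of ({2^{k−1}} + G_k^−) ∪ G_k. Then the entropy density satisfies the strengthened upper bound s_μ ≤ (1/2^m) · S( {0} | B ) + Σ_{k=1}^m (1/2^k) · min( S( {0} | B ), S( {2^{k−1}} | B_k ) ). -/

import Mathlib

open MeasureTheory Real Filter Pointwise

/-- Probability of the cylinder set determined by the configuration `x` on the finite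
set `Λ ⊆ ℤ`. -/
noncomputable def cylProb1 {𝒜 : Type*} [MeasurableSpace 𝒜]
    (μ : Measure (ℤ → 𝒜)) (Λ : Finset ℤ) (x : Λ → 𝒜) : ℝ :=
  (μ {ω | ∀ v : Λ, ω v.1 = x v}).toReal

/-- The entropy `S(Λ)` of a finite set of sites `Λ ⊆ ℤ` with respect to `μ`. -/
noncomputable def entS1 {𝒜 : Type*} [Fintype 𝒜] [MeasurableSpace 𝒜]
    (μ : Measure (ℤ → 𝒜)) (Λ : Finset ℤ) : ℝ :=
  -∑ x : (Λ → 𝒜), cylProb1 μ Λ x * Real.log (cylProb1 μ Λ x)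

/-- The conditional entropy `S(Λ | Λ')` (terms with zero probability vanish since
`Real.log 0 = 0` and `0 * log 0 = 0`). -/
noncomputable def condEnt1 {𝒜 : Type*} [Fintype 𝒜] [MeasurableSpace 𝒜]
    (μ : Measure (ℤ → 𝒜)) (Λ Λ' : Finset ℤ) : ℝ :=
  -∑ x : ((Λ ∪ Λ' : Finset ℤ) → 𝒜),
      cylProb1 μ (Λ ∪ Λ') x *
        Real.log (cylProb1 μ (Λ ∪ Λ') x /
          cylProb1 μ Λ' (fun v => x ⟨v.1, Finset.mem_union_right Λ v.2⟩))

/-- `μ` is translation invariant: it is preserved by the shift `σ`, `(σx)(i) = x(i+1)`. -/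
def TransInv1 {𝒜 : Type*} [MeasurableSpace 𝒜] (μ : Measure (ℤ → 𝒜)) : Prop :=
  μ.map (fun ω (i : ℤ) => ω (i + 1)) = μ

open Classical in
/-- The finite set `Λ' ∩ [-n, n]` for a (possibly infinite) `Λ' ⊆ ℤ`. -/
noncomputable def interBox1 (Λ' : Set ℤ) (n : ℕ) : Finset ℤ :=
  (Finset.Icc (-(n : ℤ)) (n : ℤ)).filter (· ∈ Λ')

/-!
By Fekete's lemma `s_μ = lim S([0, n)) / n ≤ S([0, L)) / L` for every `L`. Take `L = 2^m N` and
reveal the sites of `[0, L)` in `m + 1` phases: first the multiples of `2^m`, then, for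
`k = m, …, 1`, the sites of `2^(k-1) + G_k`, each phase in increasing order. By the chain rule
`S([0, L))` is the sum of the conditional entropies of the sites given everything revealed before
them. A site `t` of the first phase has `t + B` revealed before it, a site `t` of phase `k` has both
`t + B` and `t - 2^(k-1) + B_k`; since conditioning on more sites lowers the conditional entropy,
translation invariance bounds its cost by `S(0 | B)`, resp. `min (S(0 | B)) (S(2^(k-1) | B_k))`.
These sets lie within a distance `D` of `t` that depends only on `B` and the `B_k`, so only the
`2D` sites near the ends of the window, where they may stick out, have to be bounded by `S({0})`
instead. Phase `k` has `2^(m-k) N` sites, so dividing by `L` and letting `N → ∞` gives the bound.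
-/

open scoped Finset

namespace Real

-- The log-sum inequality; `hxq` excludes terms with `q i = 0 < x i`, where `log 0 = 0` is junk.
theorem sum_mul_log_div_le_sum_mul_log_div {ι : Type*} (s : Finset ι) {x q : ι → ℝ}
    (hx : ∀ i ∈ s, 0 ≤ x i) (hq : ∀ i ∈ s, 0 ≤ q i) (hxq : ∀ i ∈ s, 0 < x i → 0 < q i) :
    (∑ i ∈ s, x i) * log ((∑ i ∈ s, x i) / ∑ i ∈ s, q i) ≤ ∑ i ∈ s, x i * log (x i / q i) := by
  by_cases hx0 : ∀ i ∈ s, x i = 0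
  · rw [Finset.sum_eq_zero hx0, zero_mul]
    exact (Finset.sum_eq_zero fun i hi => by rw [hx0 i hi, zero_mul]).ge
  push Not at hx0
  obtain ⟨j, hj, hxj⟩ := hx0
  have hxj : 0 < x j := (hx j hj).lt_of_ne' hxj
  set X := ∑ i ∈ s, x i
  set Q := ∑ i ∈ s, q i
  have hX : 0 < X := hxj.trans_le (Finset.single_le_sum hx hj)
  have hQ : 0 < Q := (hxq j hj hxj).trans_le (Finset.single_le_sum hq hj)
  -- `log y ≥ 1 - 1 / y` at `y = (x i / q i) / (X / Q)`
  have key : ∀ i ∈ s, x i * log (X / Q) + (x i - q i * (X / Q)) ≤ x i * log (x i / q i) := by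
    intro i hi
    rcases (hx i hi).eq_or_lt with h | h
    · rw [← h]
      have := mul_nonneg (hq i hi) (div_nonneg hX.le hQ.le)
      simp only [zero_mul, zero_sub, zero_add]
      linarith
    · have hqi := hxq i hi h
      have hlog := one_sub_inv_le_log_of_pos (show 0 < x i / q i / (X / Q) by positivity)
      rw [log_div (by positivity) (by positivity), inv_div] at hlog
      have : x i * (1 - X / Q / (x i / q i)) = x i - q i * (X / Q) := by
        field_simp
      nlinarith [mul_le_mul_of_nonneg_left hlog h.le]
  have hsum := Finset.sum_le_sum key
  rw [Finset.sum_add_distrib, Finset.sum_sub_distrib, ← Finset.sum_mul, ← Finset.sum_mul,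
    mul_div_cancel₀ X hQ.ne'] at hsum
  linarith

end Real

section Entropy

variable {𝒜 : Type*} [MeasurableSpace 𝒜]

-- Pins down the family `π` of `Finset.restrict₂`, which elaboration cannot infer from `Λ' → 𝒜`.
abbrev restrictConf {Λ Λ' : Finset ℤ} (h : Λ ⊆ Λ') : (Λ' → 𝒜) → Λ → 𝒜 :=
  @Finset.restrict₂ ℤ (fun _ => 𝒜) Λ Λ' h

theorem cylProb1_eq_measureReal (μ : Measure (ℤ → 𝒜)) (Λ : Finset ℤ) (x : Λ → 𝒜) :
    cylProb1 μ Λ x = μ.real (Λ.restrict ⁻¹' {x}) := by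
  simp only [cylProb1, measureReal_def, Set.preimage, Set.mem_singleton_iff, funext_iff]
  rfl

theorem cylProb1_nonneg (μ : Measure (ℤ → 𝒜)) (Λ : Finset ℤ) (x : Λ → 𝒜) :
    0 ≤ cylProb1 μ Λ x :=
  ENNReal.toReal_nonneg

variable [Fintype 𝒜] (μ : Measure (ℤ → 𝒜))

theorem condEnt1_eq_sum (Λ Λ' : Finset ℤ) :
    condEnt1 μ Λ Λ' = -∑ x, cylProb1 μ (Λ ∪ Λ') x *
      log (cylProb1 μ (Λ ∪ Λ') x / cylProb1 μ Λ' (restrictConf Finset.subset_union_right x)) :=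
  rfl

theorem entS1_nonneg [IsProbabilityMeasure μ] (Λ : Finset ℤ) : 0 ≤ entS1 μ Λ := by
  rw [entS1, neg_nonneg]
  exact Finset.sum_nonpos fun x _ => mul_nonpos_of_nonneg_of_nonpos (cylProb1_nonneg μ Λ x)
    (log_nonpos (cylProb1_nonneg μ Λ x) (ENNReal.toReal_le_of_le_ofReal zero_le_one
      (by simpa using prob_le_one)))

theorem entS1_empty [IsProbabilityMeasure μ] : entS1 μ ∅ = 0 := by
  have h : ∀ x : (∅ : Finset ℤ) → 𝒜, cylProb1 μ ∅ x = 1 := fun x => by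
    simp [cylProb1]
  simp [entS1, h]

variable [MeasurableSingletonClass 𝒜] [IsFiniteMeasure μ]

open scoped Classical in
theorem sum_cylProb1_restrictConf_eq {Λ Λ' : Finset ℤ} (h : Λ ⊆ Λ') (y : Λ → 𝒜) :
    ∑ x with restrictConf h x = y, cylProb1 μ Λ' x = cylProb1 μ Λ y := by
  simp only [cylProb1_eq_measureReal]
  refine (sum_measureReal_preimage_singleton (μ := μ) (f := Λ'.restrict) _
    fun _ _ => Finset.measurable_restrict _ (measurableSet_singleton _)).trans ?_
  congr 1
  ext ω
  simp [← Finset.restrict₂_comp_restrict h]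

theorem cylProb1_le_restrictConf {Λ Λ' : Finset ℤ} (h : Λ ⊆ Λ') (x : Λ' → 𝒜) :
    cylProb1 μ Λ' x ≤ cylProb1 μ Λ (restrictConf h x) := by
  classical
  rw [← sum_cylProb1_restrictConf_eq μ h]
  exact Finset.single_le_sum (fun x _ => cylProb1_nonneg μ Λ' x) (by simp)

theorem condEnt1_eq_sub (Λ Λ' : Finset ℤ) :
    condEnt1 μ Λ Λ' = entS1 μ (Λ ∪ Λ') - entS1 μ Λ' := by
  classical
  rw [condEnt1_eq_sum]
  set r := restrictConf (𝒜 := 𝒜) (Finset.subset_union_right (s₁ := Λ) (s₂ := Λ'))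
  have hterm : ∀ x, cylProb1 μ (Λ ∪ Λ') x * log (cylProb1 μ (Λ ∪ Λ') x / cylProb1 μ Λ' (r x)) =
      cylProb1 μ (Λ ∪ Λ') x * log (cylProb1 μ (Λ ∪ Λ') x) -
        cylProb1 μ (Λ ∪ Λ') x * log (cylProb1 μ Λ' (r x)) := by
    intro x
    rcases (cylProb1_nonneg μ _ x).eq_or_lt with h | h
    · simp [← h]
    · rw [log_div h.ne' (h.trans_le (cylProb1_le_restrictConf μ _ x)).ne', mul_sub]
  have hmarg : ∑ x, cylProb1 μ (Λ ∪ Λ') x * log (cylProb1 μ Λ' (r x)) =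
      ∑ y, cylProb1 μ Λ' y * log (cylProb1 μ Λ' y) := by
    rw [← Finset.sum_fiberwise Finset.univ r]
    refine Fintype.sum_congr _ _ fun y => ?_
    calc _ = ∑ x with r x = y, cylProb1 μ (Λ ∪ Λ') x * log (cylProb1 μ Λ' y) :=
          Finset.sum_congr rfl fun x hx => by rw [(Finset.mem_filter.1 hx).2]
      _ = _ := by rw [← Finset.sum_mul, sum_cylProb1_restrictConf_eq]
  simp only [hterm, Finset.sum_sub_distrib, hmarg, entS1]
  ring

-- A configuration on `Λ ∪ Λ''` is determined by its restrictions to `Λ ∪ Λ'` and to `Λ''`.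
open scoped Classical in
theorem sum_cylProb1_restrictConf_fiber_le {Λ Λ' Λ'' : Finset ℤ} (h : Λ' ⊆ Λ'')
    (y : (Λ ∪ Λ' : Finset ℤ) → 𝒜) :
    ∑ x with restrictConf (Finset.union_subset_union_right h) x = y,
        cylProb1 μ Λ'' (restrictConf Finset.subset_union_right x) ≤
      cylProb1 μ Λ' (restrictConf Finset.subset_union_right y) := by
  set r := restrictConf (𝒜 := 𝒜) (Finset.union_subset_union_right (s := Λ) h)
  have hinj : ∀ x₁ x₂, r x₁ = y → r x₂ = y →
      restrictConf Finset.subset_union_right x₁ = restrictConf Finset.subset_union_right x₂ →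
      x₁ = x₂ := by
    intro x₁ x₂ hx₁ hx₂ hx
    funext v
    rcases Finset.mem_union.1 v.2 with hv | hv
    · exact (congrFun hx₁ ⟨v, Finset.mem_union_left _ hv⟩).trans
        (congrFun hx₂ ⟨v, Finset.mem_union_left _ hv⟩).symm
    · exact congrFun hx ⟨v, hv⟩
  rw [← Finset.sum_image fun x₁ hx₁ x₂ hx₂ =>
    hinj x₁ x₂ (by simpa using hx₁) (by simpa using hx₂), ← sum_cylProb1_restrictConf_eq μ h]
  refine Finset.sum_le_sum_of_subset_of_nonneg ?_ fun _ _ _ => cylProb1_nonneg μ _ _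
  intro z hz
  obtain ⟨x, hx, rfl⟩ := Finset.mem_image.1 hz
  simp only [Finset.mem_filter, Finset.mem_univ, true_and] at hx ⊢
  rw [← hx]
  rfl

theorem condEnt1_le_of_subset {Λ Λ' Λ'' : Finset ℤ} (h : Λ' ⊆ Λ'') :
    condEnt1 μ Λ Λ'' ≤ condEnt1 μ Λ Λ' := by
  classical
  set r := restrictConf (𝒜 := 𝒜) (Finset.union_subset_union_right (s := Λ) h)
  rw [condEnt1_eq_sum, condEnt1_eq_sum, neg_le_neg_iff, ← Finset.sum_fiberwise Finset.univ r]
  refine Finset.sum_le_sum fun y _ => ?_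
  set P := cylProb1 μ (Λ ∪ Λ') y
  set Q := ∑ x with r x = y, cylProb1 μ Λ'' (restrictConf Finset.subset_union_right x)
  have hPsum : ∑ x with r x = y, cylProb1 μ (Λ ∪ Λ'') x = P :=
    sum_cylProb1_restrictConf_eq μ _ y
  have hPQ : P ≤ Q := hPsum ▸ Finset.sum_le_sum fun x _ => cylProb1_le_restrictConf μ _ x
  have hQ : Q ≤ cylProb1 μ Λ' (restrictConf Finset.subset_union_right y) :=
    sum_cylProb1_restrictConf_fiber_le μ h y
  calc P * log (P / cylProb1 μ Λ' (restrictConf Finset.subset_union_right y))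
      ≤ P * log (P / Q) := by
        rcases (cylProb1_nonneg μ _ y).eq_or_lt with hP | hP
        · simp [P, ← hP]
        · gcongr
          · exact div_pos hP (hP.trans_le (hPQ.trans hQ))
          · exact hP.trans_le hPQ
    _ ≤ _ := by
        rw [← hPsum]
        exact Real.sum_mul_log_div_le_sum_mul_log_div _ (fun x _ => cylProb1_nonneg μ _ x)
          (fun x _ => cylProb1_nonneg μ _ _)
          (fun x _ hx => hx.trans_le (cylProb1_le_restrictConf μ _ x))

theorem condEnt1_nonneg (Λ Λ' : Finset ℤ) : 0 ≤ condEnt1 μ Λ Λ' := by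
  rw [condEnt1_eq_sum, neg_nonneg]
  refine Finset.sum_nonpos fun x _ => ?_
  rcases (cylProb1_nonneg μ _ x).eq_or_lt with h | h
  · simp [← h]
  · have hle := cylProb1_le_restrictConf μ Finset.subset_union_right x
    exact mul_nonpos_of_nonneg_of_nonpos h.le
      (log_nonpos (div_nonneg h.le (h.le.trans hle)) (div_le_one_of_le₀ hle (h.le.trans hle)))

theorem entS1_union_eq_add_sum (Λ₀ Λ : Finset ℤ) :
    entS1 μ (Λ₀ ∪ Λ) = entS1 μ Λ₀ + ∑ t ∈ Λ, condEnt1 μ {t} (Λ₀ ∪ Λ.filter (· < t)) := by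
  induction Λ using Finset.induction_on_max with
  | empty => simp
  | insert a s hlt ih =>
    have ha : a ∉ s := fun ha => lt_irrefl a (hlt a ha)
    have hfa : (insert a s).filter (· < a) = s := by
      ext x
      simp only [Finset.mem_filter, Finset.mem_insert]
      constructor
      · rintro ⟨rfl | hx, hxa⟩
        exacts [absurd hxa (lt_irrefl _), hx]
      · exact fun hx => ⟨Or.inr hx, hlt x hx⟩
    have hft : ∀ t ∈ s, (insert a s).filter (· < t) = s.filter (· < t) := fun t ht =>
      by rw [Finset.filter_insert, if_neg fun hat => lt_asymm hat (hlt t ht)]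
    rw [Finset.sum_insert ha, hfa, Finset.sum_congr rfl fun t ht => by rw [hft t ht],
      condEnt1_eq_sub, show {a} ∪ (Λ₀ ∪ s) = Λ₀ ∪ insert a s by ext; simp]
    linarith

end Entropy

theorem entS1_union_le {𝒜 : Type*} [MeasurableSpace 𝒜] [Fintype 𝒜] [MeasurableSingletonClass 𝒜]
    (μ : Measure (ℤ → 𝒜)) [IsProbabilityMeasure μ] (Λ Λ' : Finset ℤ) :
    entS1 μ (Λ ∪ Λ') ≤ entS1 μ Λ + entS1 μ Λ' := by
  have h := condEnt1_le_of_subset μ (Λ := Λ) (Finset.empty_subset Λ')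
  rw [condEnt1_eq_sub, condEnt1_eq_sub, Finset.union_empty] at h
  linarith [entS1_nonneg μ ∅]

section TranslationInvariance

variable {𝒜 : Type*} [MeasurableSpace 𝒜] {μ : Measure (ℤ → 𝒜)}

theorem measurable_shift (a : ℤ) : Measurable fun (ω : ℤ → 𝒜) (i : ℤ) => ω (i + a) :=
  measurable_pi_lambda _ fun i => measurable_pi_apply (i + a)

theorem TransInv1.map_shift (hinv : TransInv1 μ) (a : ℤ) :
    μ.map (fun ω (i : ℤ) => ω (i + a)) = μ := by
  have hcomp : ∀ b c : ℤ,
      (fun (ω : ℤ → 𝒜) (i : ℤ) => ω (i + b)) ∘ (fun (ω : ℤ → 𝒜) (i : ℤ) => ω (i + c)) =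
        fun ω i => ω (i + (b + c)) := fun b c => by
    funext ω i
    simp only [Function.comp, add_assoc]
  induction a using Int.induction_on with
  | zero => simp
  | succ n ih =>
    rw [← hcomp, ← Measure.map_map (measurable_shift _) (measurable_shift _), hinv, ih]
  | pred n ih =>
    conv_lhs => rw [← hinv]
    rw [Measure.map_map (measurable_shift _) (measurable_shift _), hcomp]
    simpa using ih

variable [Fintype 𝒜] [MeasurableSingletonClass 𝒜]

theorem TransInv1.entS1_image_add (hinv : TransInv1 μ) (a : ℤ) (Λ : Finset ℤ) :
    entS1 μ (Λ.image (· + a)) = entS1 μ Λ := by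
  let e : Λ ≃ Λ.image (· + a) := (Equiv.addRight a).subtypeEquiv fun x => by simp
  have hcyl : ∀ x : Λ → 𝒜, cylProb1 μ (Λ.image (· + a)) (x ∘ e.symm) = cylProb1 μ Λ x := by
    intro x
    have hset : ((Λ.image (· + a)).restrict ⁻¹' {x ∘ e.symm} : Set (ℤ → 𝒜)) =
        (fun ω i => ω (i + a)) ⁻¹' (Λ.restrict ⁻¹' {x} : Set (ℤ → 𝒜)) := by
      ext ω
      simp only [Set.mem_preimage, Set.mem_singleton_iff, funext_iff, Finset.restrict]
      exact ⟨fun h v => by simpa [e] using h (e v), fun h w => by simpa [e] using h (e.symm w)⟩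
    rw [cylProb1_eq_measureReal, cylProb1_eq_measureReal, hset, measureReal_def, measureReal_def,
      ← Measure.map_apply (measurable_shift a)
        (Finset.measurable_restrict _ (measurableSet_singleton x)), hinv.map_shift]
  unfold entS1
  congr 1
  refine (Fintype.sum_equiv (e.arrowCongr (Equiv.refl 𝒜)) _ _ fun x => ?_).symm
  change _ = cylProb1 μ _ (x ∘ e.symm) * log (cylProb1 μ _ (x ∘ e.symm))
  rw [hcyl]

variable [IsFiniteMeasure μ]

theorem TransInv1.condEnt1_image_add (hinv : TransInv1 μ) (a : ℤ) (Λ Λ' : Finset ℤ) :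
    condEnt1 μ (Λ.image (· + a)) (Λ'.image (· + a)) = condEnt1 μ Λ Λ' := by
  rw [condEnt1_eq_sub, condEnt1_eq_sub, ← Finset.image_union, hinv.entS1_image_add,
    hinv.entS1_image_add]

theorem TransInv1.condEnt1_singleton_le (hinv : TransInv1 μ) {t c : ℤ} {S E : Finset ℤ}
    (h : S.image (· + (t - c)) ⊆ E) : condEnt1 μ {t} E ≤ condEnt1 μ {c} S :=
  calc condEnt1 μ {t} E ≤ condEnt1 μ {t} (S.image (· + (t - c))) := condEnt1_le_of_subset μ h
    _ = condEnt1 μ (({c} : Finset ℤ).image (· + (t - c))) (S.image (· + (t - c))) := by simp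
    _ = condEnt1 μ {c} S := hinv.condEnt1_image_add _ _ _

theorem TransInv1.entS1_union_le_of_forall_mem (hinv : TransInv1 μ) {Λ₀ Λ I : Finset ℤ} {c : ℝ}
    (hc : 0 ≤ c) (hI : ∀ t ∈ Λ, t ∈ I → condEnt1 μ {t} (Λ₀ ∪ Λ.filter (· < t)) ≤ c) :
    entS1 μ (Λ₀ ∪ Λ) ≤ entS1 μ Λ₀ + #Λ * c + #(Λ \ I) * condEnt1 μ {0} ∅ := by
  classical
  rw [entS1_union_eq_add_sum, add_assoc, add_le_add_iff_left,
    ← Finset.sum_filter_add_sum_filter_not Λ (· ∈ I), Finset.filter_notMem_eq_sdiff]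
  gcongr
  · calc ∑ t ∈ Λ with t ∈ I, condEnt1 μ {t} (Λ₀ ∪ Λ.filter (· < t))
        ≤ #{t ∈ Λ | t ∈ I} * c := by
          simpa using Finset.sum_le_card_nsmul _ _ c fun t ht =>
            hI t (Finset.mem_filter.1 ht).1 (Finset.mem_filter.1 ht).2
      _ ≤ #Λ * c := by gcongr; exact Finset.filter_subset _ _
  · simpa using Finset.sum_le_card_nsmul _ _ _ fun t _ =>
      hinv.condEnt1_singleton_le (S := ∅) (c := 0) (by simp)

end TranslationInvariance

-- `[0, L) ∩ G_j`; phase `k ≥ 1` of the argument reveals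
-- `sitesDvd L (k - 1) \ sitesDvd L k = [0, L) ∩ (2^(k-1) + G_k)`.
noncomputable def sitesDvd (L : ℤ) (j : ℕ) : Finset ℤ := {t ∈ Finset.Ico 0 L | 2 ^ j ∣ t}

section Sites

variable {L t : ℤ} {j : ℕ}

theorem mem_sitesDvd : t ∈ sitesDvd L j ↔ (0 ≤ t ∧ t < L) ∧ 2 ^ j ∣ t := by
  simp [sitesDvd]

theorem sitesDvd_subset_Ico : sitesDvd L j ⊆ Finset.Ico 0 L := Finset.filter_subset _ _

theorem sitesDvd_succ_subset : sitesDvd L (j + 1) ⊆ sitesDvd L j := fun t ht => by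
  rw [mem_sitesDvd] at ht ⊢
  exact ⟨ht.1, (pow_dvd_pow 2 j.le_succ).trans ht.2⟩

theorem sitesDvd_zero : sitesDvd L 0 = Finset.Ico 0 L := by
  simp [sitesDvd]

theorem card_sitesDvd {m : ℕ} (hj : j ≤ m) (N : ℕ) :
    #(sitesDvd (2 ^ m * N) j) = 2 ^ (m - j) * N := by
  have h := Int.Ico_filter_dvd_card 0 (2 ^ m * N) (r := 2 ^ j) (by positivity)
  have hq : ((2 ^ m * N : ℤ) : ℚ) / ((2 ^ j : ℤ) : ℚ) = ((2 ^ (m - j) * N : ℕ) : ℚ) := by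
    rw [← Nat.sub_add_cancel hj]
    push_cast
    rw [Nat.add_sub_cancel, pow_add]
    field_simp
  rw [hq] at h
  simp only [Int.ceil_natCast, Int.cast_zero, zero_div, Int.ceil_zero, sub_zero] at h
  exact_mod_cast h.trans (max_eq_left (by positivity))

theorem card_sitesDvd_sdiff_succ {m : ℕ} (hj : j < m) (N : ℕ) :
    #(sitesDvd (2 ^ m * N) j \ sitesDvd (2 ^ m * N) (j + 1)) = 2 ^ (m - (j + 1)) * N := by
  rw [Finset.card_sdiff_of_subset sitesDvd_succ_subset, card_sitesDvd hj.le,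
    card_sitesDvd (show j + 1 ≤ m from hj), show m - j = m - (j + 1) + 1 by omega]
  have : 2 ^ (m - (j + 1) + 1) * N = 2 * (2 ^ (m - (j + 1)) * N) := by ring
  omega

theorem mem_sitesDvd_sdiff_succ :
    t ∈ sitesDvd L j \ sitesDvd L (j + 1) ↔ (0 ≤ t ∧ t < L) ∧ 2 ^ j ∣ t ∧ ¬ 2 ^ (j + 1) ∣ t := by
  simp only [Finset.mem_sdiff, mem_sitesDvd]
  tauto

theorem add_mem_sitesDvd_sdiff_succ {d : ℤ} (ht : t ∈ sitesDvd L j \ sitesDvd L (j + 1))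
    (hd : 2 ^ (j + 1) ∣ d) (h0 : 0 ≤ t + d) (hL : t + d < L) :
    t + d ∈ sitesDvd L j \ sitesDvd L (j + 1) := by
  rw [mem_sitesDvd_sdiff_succ] at ht ⊢
  refine ⟨⟨h0, hL⟩, dvd_add ht.2.1 ((pow_dvd_pow 2 j.le_succ).trans hd), fun h => ht.2.2 ?_⟩
  simpa using dvd_sub h hd

theorem two_pow_succ_dvd_sub_of_mem (ht : t ∈ sitesDvd L j \ sitesDvd L (j + 1)) :
    2 ^ (j + 1) ∣ t - 2 ^ j := by
  obtain ⟨-, ⟨s, rfl⟩, hndvd⟩ := mem_sitesDvd_sdiff_succ.1 ht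
  obtain ⟨r, rfl⟩ | ⟨r, rfl⟩ := Int.even_or_odd s
  · exact absurd ⟨r, by ring⟩ hndvd
  · exact ⟨r, by ring⟩

theorem bounds_of_mem_Ico_of_abs_sub_le {u : ℤ} {D : ℕ} (ht : t ∈ Finset.Ico (D : ℤ) (L - D))
    (h : |u - t| ≤ D) : 0 ≤ u ∧ u < L := by
  rw [Finset.mem_Ico] at ht
  rw [abs_le] at h
  constructor <;> linarith

theorem add_mem_filter_lt_of_mem_Ico {D : ℕ} {d : ℤ}
    (ht : t ∈ sitesDvd L j \ sitesDvd L (j + 1)) (hI : t ∈ Finset.Ico (D : ℤ) (L - D))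
    (hd : 2 ^ (j + 1) ∣ d) (hneg : d < 0) (hdD : |d| ≤ D) :
    t + d ∈ (sitesDvd L j \ sitesDvd L (j + 1)).filter (· < t) := by
  have := bounds_of_mem_Ico_of_abs_sub_le hI (u := t + d) (by simpa using hdD)
  exact Finset.mem_filter.2 ⟨add_mem_sitesDvd_sdiff_succ ht hd this.1 this.2, by linarith⟩

theorem card_sdiff_Ico_le {Λ : Finset ℤ} (D : ℕ) (h : Λ ⊆ Finset.Ico 0 L) :
    #(Λ \ Finset.Ico (D : ℤ) (L - D)) ≤ 2 * D := by
  calc #(Λ \ Finset.Ico (D : ℤ) (L - D))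
      ≤ #(Finset.Ico 0 (D : ℤ) ∪ Finset.Ico (L - D) L) := by
        refine Finset.card_le_card fun t ht => ?_
        have := Finset.mem_Ico.1 (h (Finset.mem_sdiff.1 ht).1)
        have := (Finset.mem_sdiff.1 ht).2
        simp only [Finset.mem_union, Finset.mem_Ico] at this ⊢
        omega
    _ ≤ #(Finset.Ico 0 (D : ℤ)) + #(Finset.Ico (L - D) L) := Finset.card_union_le _ _
    _ ≤ 2 * D := by simp; omega

end Sites

theorem le_add_sum_Icc_of_le_add {f a : ℕ → ℝ} {m : ℕ}
    (h : ∀ k ∈ Finset.Icc 1 m, f (k - 1) ≤ f k + a k) :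
    f 0 ≤ f m + ∑ k ∈ Finset.Icc 1 m, a k := by
  induction m with
  | zero => simp
  | succ n ih =>
    have h₁ := ih fun k hk => h k (Finset.Icc_subset_Icc_right n.le_succ hk)
    have h₂ := h (n + 1) (by simp)
    rw [Nat.add_sub_cancel] at h₂
    rw [Finset.sum_Icc_succ_top (by omega)]
    linarith

theorem le_of_forall_le_add_div_nat {s R C : ℝ} (h : ∀ N : ℕ, 1 ≤ N → s ≤ R + C / N) :
    s ≤ R :=
  ge_of_tendsto (by simpa using (tendsto_const_div_atTop_nhds_zero_nat C).const_add R)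
    (eventually_atTop.2 ⟨1, h⟩)

theorem exists_abs_le_and_abs_sub_le (m : ℕ) (B : Finset ℤ) (Bk : ℕ → Finset ℤ) :
    ∃ D : ℕ, (∀ b ∈ B, |b| ≤ D) ∧ ∀ k, 1 ≤ k → k ≤ m → ∀ b ∈ Bk k, |b - 2 ^ (k - 1)| ≤ D := by
  obtain ⟨M, hM⟩ := Finset.exists_le
    ((B ∪ (Finset.Icc 1 m).biUnion fun k => (Bk k).image (· - 2 ^ (k - 1))).image (|·|))
  refine ⟨M.toNat, fun b hb => ?_, fun k hk₁ hkm b hb => ?_⟩ <;>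
    refine (hM _ (Finset.mem_image_of_mem _ ?_)).trans (Int.self_le_toNat M)
  · exact Finset.mem_union_left _ hb
  · exact Finset.mem_union_right _ (Finset.mem_biUnion.2
      ⟨k, Finset.mem_Icc.2 ⟨hk₁, hkm⟩, Finset.mem_image_of_mem _ hb⟩)

section Window

variable {𝒜 : Type*} [MeasurableSpace 𝒜] [Fintype 𝒜] [MeasurableSingletonClass 𝒜]
  {μ : Measure (ℤ → 𝒜)} {m D : ℕ} {B : Finset ℤ}

theorem TransInv1.entS1_union_le_of_forall_mem_Ico [IsFiniteMeasure μ] (hinv : TransInv1 μ)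
    {L : ℤ} {Λ₀ Λ : Finset ℤ} {c : ℝ} (hΛ : Λ ⊆ Finset.Ico 0 L) (hc : 0 ≤ c)
    (hI : ∀ t ∈ Λ, t ∈ Finset.Ico (D : ℤ) (L - D) →
      condEnt1 μ {t} (Λ₀ ∪ Λ.filter (· < t)) ≤ c) :
    entS1 μ (Λ₀ ∪ Λ) ≤ entS1 μ Λ₀ + #Λ * c + 2 * D * condEnt1 μ {0} ∅ := by
  refine (hinv.entS1_union_le_of_forall_mem hc hI).trans ?_
  have := condEnt1_nonneg μ {0} ∅
  gcongr
  exact_mod_cast card_sdiff_Ico_le D hΛ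

theorem TransInv1.entS1_sitesDvd_top_le [IsProbabilityMeasure μ] (hinv : TransInv1 μ)
    (hB : (↑B : Set ℤ) ⊆ {x : ℤ | ∃ j : ℤ, j < 0 ∧ x = j * 2 ^ m}) (hDB : ∀ b ∈ B, |b| ≤ D)
    (N : ℕ) :
    entS1 μ (sitesDvd (2 ^ m * N) m) ≤ N * condEnt1 μ {0} B + 2 * D * condEnt1 μ {0} ∅ := by
  have h := hinv.entS1_union_le_of_forall_mem_Ico (Λ₀ := ∅) (Λ := sitesDvd (2 ^ m * N) m)
    sitesDvd_subset_Ico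
    (condEnt1_nonneg μ {0} B) fun t ht hI => by
      refine hinv.condEnt1_singleton_le (c := 0) fun u hu => ?_
      obtain ⟨b, hb, rfl⟩ := Finset.mem_image.1 hu
      obtain ⟨i, hi, rfl⟩ := hB hb
      have hneg : i * 2 ^ m < 0 := mul_neg_of_neg_of_pos hi (by positivity)
      have := bounds_of_mem_Ico_of_abs_sub_le hI (u := i * 2 ^ m + t) (by simpa using hDB _ hb)
      rw [mem_sitesDvd] at ht
      simp only [Finset.empty_union, Finset.mem_filter, mem_sitesDvd, sub_zero]
      exact ⟨⟨this, dvd_add (dvd_mul_left _ _) ht.2⟩, by linarith⟩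
  rwa [Finset.empty_union, entS1_empty, zero_add, card_sitesDvd le_rfl, Nat.sub_self,
    pow_zero, one_mul] at h

theorem TransInv1.entS1_sitesDvd_pred_le [IsFiniteMeasure μ] (hinv : TransInv1 μ)
    (hB : (↑B : Set ℤ) ⊆ {x : ℤ | ∃ j : ℤ, j < 0 ∧ x = j * 2 ^ m}) (hDB : ∀ b ∈ B, |b| ≤ D)
    {k : ℕ} (hk : 1 ≤ k) (hkm : k ≤ m) {C : Finset ℤ}
    (hC : (↑C : Set ℤ) ⊆ {x : ℤ | ∃ j : ℤ, j < 0 ∧ x = 2 ^ (k - 1) + j * 2 ^ k} ∪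
      {x : ℤ | ∃ j : ℤ, x = j * 2 ^ k})
    (hDC : ∀ b ∈ C, |b - 2 ^ (k - 1)| ≤ D) (N : ℕ) :
    entS1 μ (sitesDvd (2 ^ m * N) (k - 1)) ≤ entS1 μ (sitesDvd (2 ^ m * N) k) +
      (2 ^ (m - k) * N : ℕ) * min (condEnt1 μ {0} B) (condEnt1 μ {(2 : ℤ) ^ (k - 1)} C) +
      2 * D * condEnt1 μ {0} ∅ := by
  obtain ⟨j, rfl⟩ : ∃ j, k = j + 1 := ⟨k - 1, by omega⟩
  simp only [Nat.add_sub_cancel] at hC hDC ⊢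
  set V := sitesDvd (2 ^ m * N)
  have h := hinv.entS1_union_le_of_forall_mem_Ico (Λ₀ := V (j + 1)) (Λ := V j \ V (j + 1))
    (Finset.sdiff_subset.trans sitesDvd_subset_Ico)
    (le_min (condEnt1_nonneg μ {0} B) (condEnt1_nonneg μ _ C)) fun t ht hI => by
      refine le_min (hinv.condEnt1_singleton_le (c := 0) fun u hu => ?_)
        (hinv.condEnt1_singleton_le (c := 2 ^ j) fun u hu => ?_)
      · obtain ⟨b, hb, rfl⟩ := Finset.mem_image.1 hu
        obtain ⟨i, hi, rfl⟩ := hB hb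
        rw [sub_zero, add_comm (i * 2 ^ m) t]
        exact Finset.mem_union_right _ (add_mem_filter_lt_of_mem_Ico ht hI
          (Dvd.dvd.mul_left (pow_dvd_pow 2 hkm) _) (mul_neg_of_neg_of_pos hi (by positivity))
          (hDB _ hb))
      · obtain ⟨b, hb, rfl⟩ := Finset.mem_image.1 hu
        rcases hC hb with ⟨i, hi, rfl⟩ | ⟨i, rfl⟩
        · have hDi := hDC _ hb
          rw [add_sub_cancel_left] at hDi
          rw [show 2 ^ j + i * 2 ^ (j + 1) + (t - 2 ^ j) = t + i * 2 ^ (j + 1) by ring]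
          exact Finset.mem_union_right _ (add_mem_filter_lt_of_mem_Ico ht hI (dvd_mul_left _ _)
            (mul_neg_of_neg_of_pos hi (by positivity)) hDi)
        · have := bounds_of_mem_Ico_of_abs_sub_le hI (u := i * 2 ^ (j + 1) + (t - 2 ^ j))
            (by rw [show i * 2 ^ (j + 1) + (t - 2 ^ j) - t = i * 2 ^ (j + 1) - 2 ^ j by ring]
                exact hDC _ hb)
          exact Finset.mem_union_left _ (mem_sitesDvd.2 ⟨this,
            dvd_add (dvd_mul_left _ _) (two_pow_succ_dvd_sub_of_mem ht)⟩)
  rwa [Finset.union_sdiff_of_subset sitesDvd_succ_subset, card_sitesDvd_sdiff_succ hkm] at h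

theorem TransInv1.entS1_Ico_le [IsProbabilityMeasure μ] (hinv : TransInv1 μ)
    (hB : (↑B : Set ℤ) ⊆ {x : ℤ | ∃ j : ℤ, j < 0 ∧ x = j * 2 ^ m}) {Bk : ℕ → Finset ℤ}
    (hBk : ∀ k, 1 ≤ k → k ≤ m →
      (↑(Bk k) : Set ℤ) ⊆
        ({x : ℤ | ∃ j : ℤ, j < 0 ∧ x = 2 ^ (k - 1) + j * 2 ^ k} ∪
          {x : ℤ | ∃ j : ℤ, x = j * 2 ^ k}))
    (hDB : ∀ b ∈ B, |b| ≤ D) (hDBk : ∀ k, 1 ≤ k → k ≤ m → ∀ b ∈ Bk k, |b - 2 ^ (k - 1)| ≤ D)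
    (N : ℕ) :
    entS1 μ (Finset.Ico 0 (2 ^ m * N)) ≤
      2 ^ m * N * ((1 / 2 ^ m) * condEnt1 μ {0} B +
        ∑ k ∈ Finset.Icc 1 m, (1 / 2 ^ k : ℝ) *
          min (condEnt1 μ {0} B) (condEnt1 μ {(2 : ℤ) ^ (k - 1)} (Bk k))) +
      (m + 1) * (2 * D * condEnt1 μ {0} ∅) := by
  have htel := le_add_sum_Icc_of_le_add (f := fun k => entS1 μ (sitesDvd (2 ^ m * N) k))
    (a := fun k => (2 ^ (m - k) * N : ℕ) *
      min (condEnt1 μ {0} B) (condEnt1 μ {(2 : ℤ) ^ (k - 1)} (Bk k)) + 2 * D * condEnt1 μ {0} ∅)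
    fun k hk => by
      obtain ⟨hk₁, hkm⟩ := Finset.mem_Icc.1 hk
      linarith [hinv.entS1_sitesDvd_pred_le hB hDB hk₁ hkm (hBk k hk₁ hkm) (hDBk k hk₁ hkm) N]
  have htop := hinv.entS1_sitesDvd_top_le hB hDB N
  simp only [sitesDvd_zero, Finset.sum_add_distrib, Finset.sum_const, Nat.card_Icc,
    nsmul_eq_mul, add_tsub_cancel_right] at htel
  have hR : (2 ^ m * N : ℝ) * ((1 / 2 ^ m) * condEnt1 μ {0} B +
      ∑ k ∈ Finset.Icc 1 m, (1 / 2 ^ k : ℝ) *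
        min (condEnt1 μ {0} B) (condEnt1 μ {(2 : ℤ) ^ (k - 1)} (Bk k))) =
      N * condEnt1 μ {0} B + ∑ k ∈ Finset.Icc 1 m, ((2 ^ (m - k) * N : ℕ) : ℝ) *
        min (condEnt1 μ {0} B) (condEnt1 μ {(2 : ℤ) ^ (k - 1)} (Bk k)) := by
    rw [mul_add, Finset.mul_sum]
    congr 1
    · field_simp
    · refine Finset.sum_congr rfl fun k hk => ?_
      rw [← pow_sub_mul_pow (2 : ℝ) (Finset.mem_Icc.1 hk).2]
      push_cast
      field_simp
  rw [hR]
  linarith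

end Window

section Density

variable {𝒜 : Type*} [MeasurableSpace 𝒜] [Fintype 𝒜] [MeasurableSingletonClass 𝒜]
  {μ : Measure (ℤ → 𝒜)} [IsProbabilityMeasure μ]

theorem TransInv1.subadditive_entS1_Ico (hinv : TransInv1 μ) :
    Subadditive fun n : ℕ => entS1 μ (Finset.Ico 0 (n : ℤ)) := by
  intro p q
  have hsplit : Finset.Ico (0 : ℤ) ((p + q : ℕ) : ℤ) =
      Finset.Ico 0 (p : ℤ) ∪ (Finset.Ico 0 (q : ℤ)).image (· + (p : ℤ)) := by
    rw [Finset.image_add_right_Ico, zero_add, Finset.Ico_union_Ico_eq_Ico (by positivity)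
      (by omega)]
    push_cast
    ring_nf
  simp only
  rw [hsplit, ← hinv.entS1_image_add (p : ℤ) (Finset.Ico 0 (q : ℤ))]
  exact entS1_union_le μ _ _

theorem TransInv1.exists_tendsto_entS1_Ico_div (hinv : TransInv1 μ) :
    ∃ s : ℝ, Tendsto (fun n : ℕ => entS1 μ (Finset.Ico 0 (n : ℤ)) / n) atTop (nhds s) ∧
      ∀ n : ℕ, n ≠ 0 → s ≤ entS1 μ (Finset.Ico 0 (n : ℤ)) / n := by
  have hbdd : BddBelow (Set.range fun n : ℕ => entS1 μ (Finset.Ico 0 (n : ℤ)) / n) :=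
    ⟨0, by rintro _ ⟨n, rfl⟩; exact div_nonneg (entS1_nonneg μ _) n.cast_nonneg⟩
  exact ⟨_, hinv.subadditive_entS1_Ico.tendsto_lim hbdd,
    fun n hn => hinv.subadditive_entS1_Ico.lim_le_div hbdd hn⟩

end Density

theorem entropy_density_hierarchical_upper_bound_min_general {𝒜 : Type*} [Fintype 𝒜]
    [MeasurableSpace 𝒜] [MeasurableSingletonClass 𝒜]
    (μ : Measure (ℤ → 𝒜)) [IsProbabilityMeasure μ] (hinv : TransInv1 μ)
    (m : ℕ)
    (B : Finset ℤ) (hB : (↑B : Set ℤ) ⊆ {x : ℤ | ∃ j : ℤ, j < 0 ∧ x = j * 2 ^ m})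
    (Bk : ℕ → Finset ℤ)
    (hBk : ∀ k, 1 ≤ k → k ≤ m →
      (↑(Bk k) : Set ℤ) ⊆
        ({x : ℤ | ∃ j : ℤ, j < 0 ∧ x = 2 ^ (k - 1) + j * 2 ^ k} ∪
          {x : ℤ | ∃ j : ℤ, x = j * 2 ^ k})) :
    ∃ s : ℝ,
      Filter.Tendsto (fun n : ℕ => entS1 μ (Finset.Ico (0 : ℤ) (n : ℤ)) / (n : ℝ))
        Filter.atTop (nhds s) ∧
      s ≤ (1 / 2 ^ m) * condEnt1 μ {0} B +
        ∑ k ∈ Finset.Icc 1 m, (1 / 2 ^ k : ℝ) *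
          min (condEnt1 μ {0} B) (condEnt1 μ {(2 : ℤ) ^ (k - 1)} (Bk k)) := by
  obtain ⟨s, hs, hs_le⟩ := hinv.exists_tendsto_entS1_Ico_div
  obtain ⟨D, hDB, hDBk⟩ := exists_abs_le_and_abs_sub_le m B Bk
  refine ⟨s, hs, le_of_forall_le_add_div_nat
    (C := (m + 1) * (2 * D * condEnt1 μ {0} ∅) / 2 ^ m) fun N hN => ?_⟩
  have hL : (0 : ℝ) < 2 ^ m * N := by positivity
  have hs_N := hs_le (2 ^ m * N) (by positivity)
  push_cast at hs_N
  rw [le_div_iff₀ hL] at hs_N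
  have hwin := hs_N.trans (hinv.entS1_Ico_le hB hBk hDB hDBk N)
  rw [div_div, ← sub_le_iff_le_add', le_div_iff₀ hL]
  linarith

/-- strengthened finite-window upper bound. For a translation invariant
probability measure `μ` on `𝒜^ℤ`, `m ≥ 1`, any finite `B ⊆ G_m^-` and, for `1 ≤ k ≤ m`,
any finite `B_k ⊆ ({2^{k−1}} + G_k^-) ∪ G_k`, the entropy density satisfies
`s_μ ≤ (1/2^m)·S({0} | B) + Σ_{k=1}^m (1/2^k)·min(S({0} | B), S({2^{k−1}} | B_k))`. -/
theorem entropy_density_hierarchical_upper_bound_min {𝒜 : Type*} [Fintype 𝒜] [Nonempty 𝒜]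
    [MeasurableSpace 𝒜] [MeasurableSingletonClass 𝒜]
    (μ : Measure (ℤ → 𝒜)) [IsProbabilityMeasure μ] (hinv : TransInv1 μ)
    (m : ℕ) (hm : 1 ≤ m)
    (B : Finset ℤ) (hB : (↑B : Set ℤ) ⊆ {x : ℤ | ∃ j : ℤ, j < 0 ∧ x = j * 2 ^ m})
    (Bk : ℕ → Finset ℤ)
    (hBk : ∀ k, 1 ≤ k → k ≤ m →
      (↑(Bk k) : Set ℤ) ⊆
        ({x : ℤ | ∃ j : ℤ, j < 0 ∧ x = 2 ^ (k - 1) + j * 2 ^ k} ∪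
          {x : ℤ | ∃ j : ℤ, x = j * 2 ^ k})) :
    ∃ s : ℝ,
      Filter.Tendsto (fun n : ℕ => entS1 μ (Finset.Ico (0 : ℤ) (n : ℤ)) / (n : ℝ))
        Filter.atTop (nhds s) ∧
      s ≤ (1 / 2 ^ m) * condEnt1 μ {0} B +
        ∑ k ∈ Finset.Icc 1 m, (1 / 2 ^ k : ℝ) *
          min (condEnt1 μ {0} B) (condEnt1 μ {(2 : ℤ) ^ (k - 1)} (Bk k)) :=
  entropy_density_hierarchical_upper_bound_min_general μ hinv m B hB Bk hBk
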